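/- arXiv:2103.09397 — 2 statements merged into one kernel-verified Lean document; each statement's English description precedes it below -/
import Mathlib

section
/- Let Q ⊆ ℂⁿ be an open complete circular domain containing 0. Let f be holomorphic on Q with |f(z)| < 1 for all z ∈ Q, and suppose f(z) = Σ_{k=0}^∞ P_k(z) on Q, where each P_k is a homogeneous polynomial map of degree k. Let a = |f(0)| < 1 and p ∈ (0,2]. Then for every w ∈ Q and every r with 0 ≤ r ≤ R_p := p/(√(4p+1) + p + 1), one has |f(r•w)|^p + Σ_{k=1}^∞ |P_k(r•w)| + (1/(1+a) + r/(1−r)) · Σ_{k=1}^∞ |P_k(r•w)|² ≤ 1. -/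
/-!
Restricting `f` to the complex line through `w` gives a holomorphic self-map `g ξ = f (ξ • w)`
of the unit disc with Taylor coefficients `c_k = P_k(w)`, so everything reduces to one variable.
There the Schwarz–Pick lemma gives `|g r| ≤ (a + r) / (1 + a r)`, and Wiener's inequality
`|c_k| ≤ 1 - a ^ 2` (Schwarz–Pick at `0` for the multisection `Σ_m c_{km} ζ ^ m`, an average of
`g` over rotations by `k`-th roots of unity) dominates both series by geometric ones. Together
with `t ^ p ≤ 1 - (p / 2) (1 - t ^ 2)` for `p ≤ 2`, the remaining real inequality reduces to
`2 r (1 + r) ≤ p (1 - r) ^ 2`, which is `r ≤ R_p`.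
-/

open Metric Set Complex ComplexConjugate Finset

noncomputable def mobius (b z : ℂ) : ℂ := (b - z) / (1 - conj b * z)

lemma normSq_one_sub_conj_mul_sub_normSq_sub (b z : ℂ) :
    normSq (1 - conj b * z) - normSq (b - z) = (1 - normSq b) * (1 - normSq z) := by
  simp only [normSq_apply, sub_re, sub_im, mul_re, mul_im, conj_re, conj_im, one_re, one_im]
  ring

lemma one_sub_div_one_add_mul_sq {x y : ℝ} (h : 1 + x * y ≠ 0) :
    1 - ((x + y) / (1 + x * y)) ^ 2 = (1 - x ^ 2) * (1 - y ^ 2) / (1 + x * y) ^ 2 := by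
  field_simp
  ring

lemma one_sub_conj_mul_ne_zero {b z : ℂ} (hb : ‖b‖ < 1) (hz : ‖z‖ < 1) :
    1 - conj b * z ≠ 0 := by
  refine sub_ne_zero.2 fun h => ?_
  have : ‖conj b * z‖ < 1 := by
    rw [norm_mul, RCLike.norm_conj]
    exact mul_lt_one_of_nonneg_of_lt_one_left (norm_nonneg b) hb hz.le
  rw [← h, norm_one] at this
  exact this.false

lemma one_sub_sq_norm_mobius {b z : ℂ} (hb : ‖b‖ < 1) (hz : ‖z‖ < 1) :
    1 - ‖mobius b z‖ ^ 2 = (1 - ‖b‖ ^ 2) * (1 - ‖z‖ ^ 2) / ‖1 - conj b * z‖ ^ 2 := by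
  have hden : ‖1 - conj b * z‖ ^ 2 ≠ 0 := by
    simpa using one_sub_conj_mul_ne_zero hb hz
  rw [mobius, norm_div, div_pow, eq_div_iff hden, sub_mul, one_mul, div_mul_cancel₀ _ hden]
  simp only [Complex.sq_norm]
  linarith [normSq_one_sub_conj_mul_sub_normSq_sub b z]

lemma norm_mobius_lt_one {b z : ℂ} (hb : ‖b‖ < 1) (hz : ‖z‖ < 1) : ‖mobius b z‖ < 1 := by
  have h := one_sub_sq_norm_mobius hb hz
  have hpos : 0 < (1 - ‖b‖ ^ 2) * (1 - ‖z‖ ^ 2) / ‖1 - conj b * z‖ ^ 2 := by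
    have := one_sub_conj_mul_ne_zero hb hz
    have := pow_lt_one₀ (norm_nonneg b) hb two_ne_zero
    have := pow_lt_one₀ (norm_nonneg z) hz two_ne_zero
    apply div_pos <;> positivity
  nlinarith [norm_nonneg (mobius b z)]

lemma norm_le_of_norm_mobius_le {b z : ℂ} {r : ℝ} (hb : ‖b‖ < 1) (hz : ‖z‖ < 1)
    (h : ‖mobius b z‖ ≤ r) : ‖z‖ ≤ (‖b‖ + r) / (1 + ‖b‖ * r) := by
  set a := ‖b‖
  set A := ‖z‖
  have ha0 : 0 ≤ a := norm_nonneg b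
  have hA0 : 0 ≤ A := norm_nonneg z
  have hr0 : 0 ≤ r := (norm_nonneg _).trans h
  have haA : 0 < 1 - a * A := by nlinarith [mul_le_mul hb.le hz.le hA0 zero_le_one]
  have hden : 1 - a * A ≤ ‖1 - conj b * z‖ := by
    calc 1 - a * A = ‖(1 : ℂ)‖ - ‖conj b * z‖ := by rw [norm_mul, RCLike.norm_conj, norm_one]
      _ ≤ ‖1 - conj b * z‖ := norm_sub_norm_le _ _
  have hnum : 0 ≤ (1 - a ^ 2) * (1 - A ^ 2) := by
    have := pow_lt_one₀ ha0 hb two_ne_zero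
    have := pow_lt_one₀ hA0 hz two_ne_zero
    positivity
  -- Since `|1 - b̄ z| ≥ 1 - |b| |z|`, the identity for `1 - |mobius b z| ^ 2` gives
  -- `(|z| - |b|) / (1 - |b| |z|) ≤ |mobius b z| ≤ r`.
  have hden_le : (1 - a ^ 2) * (1 - A ^ 2) / ‖1 - conj b * z‖ ^ 2
      ≤ (1 - a ^ 2) * (1 - A ^ 2) / (1 - a * A) ^ 2 :=
    div_le_div_of_nonneg_left hnum (by positivity) (pow_le_pow_left₀ haA.le hden 2)
  have hid := one_sub_div_one_add_mul_sq (x := -a) (y := A) (by linarith)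
  rw [neg_sq, show 1 + -a * A = 1 - a * A by ring] at hid
  have hsq : ((-a + A) / (1 - a * A)) ^ 2 ≤ r ^ 2 := by
    linarith [one_sub_sq_norm_mobius hb hz, pow_le_pow_left₀ (norm_nonneg _) h 2]
  have hle : (-a + A) / (1 - a * A) ≤ r := (abs_le_of_sq_le_sq' hsq hr0).2
  rw [div_le_iff₀ (by nlinarith)] at hle
  rw [le_div_iff₀ (by positivity)]
  nlinarith

section SchwarzPick

variable {g : ℂ → ℂ}

lemma norm_zero_lt_one_of_mapsTo_ball (hg : MapsTo g (ball 0 1) (ball 0 1)) : ‖g 0‖ < 1 :=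
  mem_ball_zero_iff.1 (hg (mem_ball_self one_pos))

lemma mapsTo_mobius_comp (hg : MapsTo g (ball 0 1) (ball 0 1)) :
    MapsTo (fun z => mobius (g 0) (g z)) (ball 0 1) (ball 0 1) := fun _ hz =>
  mem_ball_zero_iff.2 <|
    norm_mobius_lt_one (norm_zero_lt_one_of_mapsTo_ball hg) (mem_ball_zero_iff.1 (hg hz))

lemma differentiableOn_mobius_comp (hd : DifferentiableOn ℂ g (ball 0 1))
    (hg : MapsTo g (ball 0 1) (ball 0 1)) :
    DifferentiableOn ℂ (fun z => mobius (g 0) (g z)) (ball 0 1) :=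
  ((differentiableOn_const _).sub hd).div
    ((differentiableOn_const _).sub ((differentiableOn_const _).mul hd)) fun _ hz =>
    one_sub_conj_mul_ne_zero (norm_zero_lt_one_of_mapsTo_ball hg) (mem_ball_zero_iff.1 (hg hz))

theorem norm_le_of_mapsTo_ball (hd : DifferentiableOn ℂ g (ball 0 1))
    (hg : MapsTo g (ball 0 1) (ball 0 1)) {z : ℂ} (hz : z ∈ ball 0 1) :
    ‖g z‖ ≤ (‖g 0‖ + ‖z‖) / (1 + ‖g 0‖ * ‖z‖) := by
  refine norm_le_of_norm_mobius_le (norm_zero_lt_one_of_mapsTo_ball hg)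
    (mem_ball_zero_iff.1 (hg hz)) ?_
  exact Complex.norm_le_norm_of_mapsTo_ball (differentiableOn_mobius_comp hd hg)
    ((mapsTo_mobius_comp hg).mono_right ball_subset_closedBall) (by simp [mobius])
    (mem_ball_zero_iff.1 hz)

lemma hasDerivAt_mobius_self {b : ℂ} (hb : ‖b‖ < 1) :
    HasDerivAt (mobius b) (-((1 - normSq b : ℝ) : ℂ)⁻¹) b := by
  have hne : (1 : ℂ) - conj b * b ≠ 0 := one_sub_conj_mul_ne_zero hb hb
  refine (((hasDerivAt_id' b).const_sub b).div
    (((hasDerivAt_id' b).const_mul (conj b)).const_sub 1) hne).congr_deriv ?_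
  push_cast
  rw [normSq_eq_conj_mul_self]
  field_simp
  ring

theorem norm_deriv_le_one_sub_sq_of_mapsTo_ball (hd : DifferentiableOn ℂ g (ball 0 1))
    (hg : MapsTo g (ball 0 1) (ball 0 1)) : ‖deriv g 0‖ ≤ 1 - ‖g 0‖ ^ 2 := by
  have hb := norm_zero_lt_one_of_mapsTo_ball hg
  have hpos : 0 < 1 - normSq (g 0) := by
    rw [← Complex.sq_norm]; linarith [pow_lt_one₀ (norm_nonneg _) hb two_ne_zero]
  have hgd : HasDerivAt g (deriv g 0) 0 :=
    (hd.differentiableAt (ball_mem_nhds 0 one_pos)).hasDerivAt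
  have hchain := (hasDerivAt_mobius_self hb).comp 0 hgd
  have hschwarz := Complex.norm_deriv_le_one_of_mapsTo_ball (differentiableOn_mobius_comp hd hg)
    (by simpa [mobius] using (mapsTo_mobius_comp hg).mono_right ball_subset_closedBall) one_pos
  rw [show (fun z => mobius (g 0) (g z)) = mobius (g 0) ∘ g from rfl, hchain.deriv, norm_mul,
    norm_neg, norm_inv, norm_real, Real.norm_of_nonneg hpos.le, inv_mul_le_iff₀ hpos,
    mul_one] at hschwarz
  rwa [← Complex.sq_norm] at hschwarz

end SchwarzPick

lemma IsPrimitiveRoot.sum_range_pow_pow {R : Type*} [CommRing R] [IsDomain R] {ω : R} {k : ℕ}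
    (hω : IsPrimitiveRoot ω k) (n : ℕ) :
    ∑ j ∈ range k, (ω ^ j) ^ n = if k ∣ n then (k : R) else 0 := by
  simp_rw [← pow_mul, mul_comm _ n, pow_mul]
  split_ifs with hdvd
  · simp [(hω.pow_eq_one_iff_dvd n).2 hdvd]
  · have hne : ω ^ n - 1 ≠ 0 := sub_ne_zero.2 fun h => hdvd ((hω.pow_eq_one_iff_dvd n).1 h)
    have h := geom_sum_mul (ω ^ n) k
    rw [← pow_mul, mul_comm n k, pow_mul, hω.pow_eq_one, one_pow, sub_self] at h
    exact (mul_eq_zero.1 h).resolve_right hne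

-- Averaging `g` over the rotations of `ξ` by `k`-th roots of unity keeps exactly the terms of
-- degree divisible by `k`.
lemma hasSum_average_rotations {c : ℕ → ℂ} {g : ℂ → ℂ}
    (hc : ∀ z ∈ ball (0 : ℂ) 1, HasSum (fun n => c n * z ^ n) (g z)) {k : ℕ} (hk : 0 < k)
    {ω : ℂ} (hω : IsPrimitiveRoot ω k) {ξ : ℂ} (hξ : ξ ∈ ball (0 : ℂ) 1) :
    HasSum (fun m => c (k * m) * (ξ ^ k) ^ m) ((k : ℂ)⁻¹ * ∑ j ∈ range k, g (ω ^ j * ξ)) := by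
  have hrot : ∀ j, ω ^ j * ξ ∈ ball (0 : ℂ) 1 := fun j => by
    simpa [norm_mul, norm_pow, hω.norm'_eq_one hk.ne'] using hξ
  have hsum := (hasSum_sum (s := range k) fun j _ => hc _ (hrot j)).mul_left (k : ℂ)⁻¹
  have hterm : ∀ n, (k : ℂ)⁻¹ * ∑ j ∈ range k, c n * (ω ^ j * ξ) ^ n
      = if k ∣ n then c n * ξ ^ n else 0 := fun n => by
    simp_rw [mul_pow, ← mul_sum, ← sum_mul, hω.sum_range_pow_pow n]
    split_ifs
    · field_simp [show (k : ℂ) ≠ 0 by exact_mod_cast hk.ne']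
    · simp
  simp_rw [hterm] at hsum
  have hsupp : ∀ n ∉ Set.range (k * ·), (if k ∣ n then c n * ξ ^ n else 0) = 0 :=
    fun n hn => if_neg fun ⟨m, hm⟩ => hn ⟨m, hm.symm⟩
  rw [← (mul_right_injective₀ hk.ne').hasSum_iff hsupp] at hsum
  simpa [Function.comp_def, ← pow_mul] using hsum

noncomputable def multisection (c : ℕ → ℂ) (k : ℕ) : ℂ → ℂ :=
  FormalMultilinearSeries.ofScalarsSum fun m => c (k * m)

lemma hasFPowerSeriesOnBall_multisection {c : ℕ → ℂ} (hcs : Summable c) (k : ℕ) :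
    HasFPowerSeriesOnBall (multisection c k)
      (FormalMultilinearSeries.ofScalars ℂ fun m => c (k * m)) 0 1 := by
  set F := FormalMultilinearSeries.ofScalars ℂ fun m => c (k * m)
  have hF : 1 ≤ F.radius := by
    have hbound : ∀ m, ‖F m‖ * ((1 : NNReal) : ℝ) ^ m ≤ ∑' j, ‖c j‖ := fun m => by
      rw [FormalMultilinearSeries.ofScalars_norm, NNReal.coe_one, one_pow, mul_one]
      exact (summable_norm_iff.2 hcs).le_tsum _ fun _ _ => norm_nonneg _
    exact_mod_cast F.le_radius_of_bound _ hbound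
  exact (F.hasFPowerSeriesOnBall (one_pos.trans_le hF)).mono one_pos hF

lemma hasSum_multisection_apply {c : ℕ → ℂ} (hcs : Summable c) (k : ℕ) {ζ : ℂ}
    (hζ : ζ ∈ ball (0 : ℂ) 1) : HasSum (fun m => c (k * m) * ζ ^ m) (multisection c k ζ) := by
  have h := (hasFPowerSeriesOnBall_multisection hcs k).hasSum
    (y := ζ) (by rwa [← ENNReal.coe_one, Metric.eball_coe, NNReal.coe_one])
  simpa [FormalMultilinearSeries.ofScalars_apply_eq, mul_comm] using h

lemma inv_natCast_mul_sum_mem_ball {k : ℕ} (hk : 0 < k) {z : ℕ → ℂ}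
    (hz : ∀ j, z j ∈ ball (0 : ℂ) 1) : (k : ℂ)⁻¹ * ∑ j ∈ range k, z j ∈ ball (0 : ℂ) 1 := by
  have h := (convex_ball (0 : ℂ) 1).centerMass_mem (t := range k) (w := fun _ => (1 : ℝ))
    (fun _ _ => zero_le_one) (by simpa using hk) fun j _ => hz j
  simpa [Finset.centerMass, Complex.real_smul] using h

/-- Wiener's inequality. -/
theorem norm_coeff_le_one_sub_sq {g : ℂ → ℂ} (hg : MapsTo g (ball 0 1) (ball 0 1)) {c : ℕ → ℂ}
    (hc : ∀ z ∈ ball (0 : ℂ) 1, HasSum (fun n => c n * z ^ n) (g z)) (hcs : Summable c)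
    {k : ℕ} (hk : 0 < k) : ‖c k‖ ≤ 1 - ‖c 0‖ ^ 2 := by
  have hH := hasFPowerSeriesOnBall_multisection hcs k
  have hω := Complex.isPrimitiveRoot_exp k hk.ne'
  have hmaps : MapsTo (multisection c k) (ball 0 1) (ball 0 1) := by
    intro ζ hζ
    obtain ⟨ξ, rfl⟩ := IsAlgClosed.exists_pow_nat_eq ζ hk
    have hξ : ξ ∈ ball (0 : ℂ) 1 := by
      rw [mem_ball_zero_iff, norm_pow, pow_lt_one_iff_of_nonneg (norm_nonneg _) hk.ne'] at hζ
      exact mem_ball_zero_iff.2 hζ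
    rw [(hasSum_multisection_apply hcs k hζ).unique (hasSum_average_rotations hc hk hω hξ)]
    exact inv_natCast_mul_sum_mem_ball hk fun j =>
      hg (by simpa [hω.norm'_eq_one hk.ne'] using hξ)
  have hd := hH.differentiableOn
  rw [← ENNReal.coe_one, Metric.eball_coe, NNReal.coe_one] at hd
  have h := norm_deriv_le_one_sub_sq_of_mapsTo_ball hd hmaps
  rw [hH.hasFPowerSeriesAt.deriv] at h
  simpa [multisection, FormalMultilinearSeries.ofScalarsSum_zero,
    FormalMultilinearSeries.ofScalars_apply_eq] using h

-- `R_p` is the smallest positive root of `2 r (1 + r) = p (1 - r) ^ 2`.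
noncomputable def bohrRadius (p : ℝ) : ℝ := p / (Real.sqrt (4 * p + 1) + p + 1)

lemma bohrRadius_lt_one {p : ℝ} (hp : 0 < p) : bohrRadius p < 1 :=
  (div_lt_one (by positivity)).2 (by linarith [Real.sqrt_nonneg (4 * p + 1)])

lemma two_mul_mul_one_add_le_of_le_bohrRadius {p r : ℝ} (hp : 0 < p) (hr0 : 0 ≤ r)
    (hr : r ≤ bohrRadius p) : 2 * r * (1 + r) ≤ p * (1 - r) ^ 2 := by
  set s := Real.sqrt (4 * p + 1)
  have hs0 : 0 ≤ s := Real.sqrt_nonneg _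
  have hs2 : s ^ 2 = 4 * p + 1 := Real.sq_sqrt (by linarith)
  have h1 : r * s ≤ p - r * (p + 1) := by
    rw [bohrRadius, le_div_iff₀ (by positivity)] at hr
    linarith
  have h2 : r ^ 2 * (4 * p + 1) ≤ (p - r * (p + 1)) ^ 2 := by
    rw [← hs2, ← mul_pow]
    exact pow_le_pow_left₀ (mul_nonneg hr0 hs0) h1 2
  nlinarith

lemma rpow_le_one_sub_mul_one_sub_sq {t p : ℝ} (ht0 : 0 ≤ t) (hp0 : 0 < p)
    (hp2 : p ≤ 2) : t ^ p ≤ 1 - p / 2 * (1 - t ^ 2) := by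
  calc t ^ p = (1 + (t ^ 2 - 1)) ^ (p / 2) := by
        rw [add_sub_cancel, ← Real.rpow_two, ← Real.rpow_mul ht0, mul_div_cancel₀ _ two_ne_zero]
    _ ≤ 1 + p / 2 * (t ^ 2 - 1) :=
        rpow_one_add_le_one_add_mul_self (by nlinarith) (by linarith) (by linarith)
    _ = 1 - p / 2 * (1 - t ^ 2) := by ring

lemma series_majorant_le {a r : ℝ} (ha0 : 0 ≤ a) (ha1 : a < 1) (hr0 : 0 ≤ r)
    (hr3 : 3 * r ≤ 1) :
    (1 - a ^ 2) * (r / (1 - r))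
        + (1 / (1 + a) + r / (1 - r)) * ((1 - a ^ 2) ^ 2 * (r ^ 2 / (1 - r ^ 2)))
      ≤ r * (1 + r) / (1 - r) ^ 2 * ((1 - a ^ 2) * (1 - r ^ 2) / (1 + a * r) ^ 2) := by
  have h1r : 0 < 1 - r := by linarith
  have h1r2 : 0 < 1 - r ^ 2 := by nlinarith
  have h1a2 : 0 < 1 - a ^ 2 := by nlinarith
  have hcubic : (1 + a * r) ^ 3 ≤ (2 + r + a * r) * (1 - r ^ 2) := by
    have har : a * r ≤ r := mul_le_of_le_one_left hr0 ha1.le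
    nlinarith [mul_nonneg (mul_nonneg ha0 hr0) (sub_nonneg.2 har),
      mul_nonneg (sub_nonneg.2 har) hr0, mul_nonneg (sub_nonneg.2 har) (mul_nonneg ha0 hr0)]
  rw [← sub_nonneg]
  have hfactor : r * (1 + r) / (1 - r) ^ 2 * ((1 - a ^ 2) * (1 - r ^ 2) / (1 + a * r) ^ 2)
      - ((1 - a ^ 2) * (r / (1 - r))
        + (1 / (1 + a) + r / (1 - r)) * ((1 - a ^ 2) ^ 2 * (r ^ 2 / (1 - r ^ 2))))
      = (1 - a ^ 2) * (1 - a) * r ^ 2 * ((2 + r + a * r) * (1 - r ^ 2) - (1 + a * r) ^ 3)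
          / ((1 - r) * (1 - r ^ 2) * (1 + a * r) ^ 2) := by
    field_simp
    ring
  rw [hfactor]
  have := sub_nonneg.2 hcubic
  have : 0 ≤ 1 - a := by linarith
  positivity

lemma bohr_majorant_le_one {a r p : ℝ} (ha0 : 0 ≤ a) (ha1 : a < 1) (hr0 : 0 ≤ r) (hp0 : 0 < p)
    (hp2 : p ≤ 2) (hr : r ≤ bohrRadius p) :
    ((a + r) / (1 + a * r)) ^ p + (1 - a ^ 2) * (r / (1 - r))
      + (1 / (1 + a) + r / (1 - r)) * ((1 - a ^ 2) ^ 2 * (r ^ 2 / (1 - r ^ 2))) ≤ 1 := by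
  have hq := two_mul_mul_one_add_le_of_le_bohrRadius hp0 hr0 hr
  have hr3 : 3 * r ≤ 1 := by nlinarith [mul_nonneg (sub_nonneg.2 hp2) (sq_nonneg (1 - r))]
  have h1ar : 0 < 1 + a * r := by positivity
  have hrpow := rpow_le_one_sub_mul_one_sub_sq (by positivity : 0 ≤ (a + r) / (1 + a * r)) hp0 hp2
  rw [one_sub_div_one_add_mul_sq h1ar.ne'] at hrpow
  have hhalf : r * (1 + r) / (1 - r) ^ 2 ≤ p / 2 := by
    rw [div_le_div_iff₀ (by nlinarith) two_pos]
    linarith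
  have hX : 0 ≤ (1 - a ^ 2) * (1 - r ^ 2) / (1 + a * r) ^ 2 := by
    have : 0 ≤ 1 - a ^ 2 := by nlinarith
    have : 0 ≤ 1 - r ^ 2 := by nlinarith
    positivity
  linarith [series_majorant_le ha0 ha1 hr0 hr3, mul_le_mul_of_nonneg_right hhalf hX]

lemma summable_and_tsum_le_of_le_geometric {u : ℕ → ℝ} {β ρ : ℝ} (hu0 : ∀ k, 0 ≤ u k)
    (hu : ∀ k, u k ≤ β * ρ ^ (k + 1)) (hρ0 : 0 ≤ ρ) (hρ1 : ρ < 1) :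
    Summable u ∧ ∑' k, u k ≤ β * (ρ / (1 - ρ)) := by
  have hgeo : HasSum (fun k => β * ρ ^ (k + 1)) (β * (ρ / (1 - ρ))) := by
    simpa only [pow_succ', mul_assoc, div_eq_mul_inv] using
      (hasSum_geometric_of_lt_one hρ0 hρ1).mul_left (β * ρ)
  have hu_sum := Summable.of_nonneg_of_le hu0 hu hgeo.summable
  exact ⟨hu_sum, hgeo.tsum_eq ▸ hu_sum.tsum_le_tsum hu hgeo.summable⟩

theorem bohr_inequality_of_mapsTo_ball {g : ℂ → ℂ} (hd : DifferentiableOn ℂ g (ball 0 1))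
    (hg : MapsTo g (ball 0 1) (ball 0 1)) {c : ℕ → ℂ}
    (hc : ∀ z ∈ ball (0 : ℂ) 1, HasSum (fun n => c n * z ^ n) (g z)) (hcs : Summable c)
    {p r : ℝ} (hp0 : 0 < p) (hp2 : p ≤ 2) (hr0 : 0 ≤ r) (hr : r ≤ bohrRadius p) :
    Summable (fun k => ‖c (k + 1)‖ * r ^ (k + 1)) ∧
    Summable (fun k => (‖c (k + 1)‖ * r ^ (k + 1)) ^ 2) ∧
    ‖g r‖ ^ p + ∑' k, ‖c (k + 1)‖ * r ^ (k + 1) +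
      (1 / (1 + ‖g 0‖) + r / (1 - r)) * ∑' k, (‖c (k + 1)‖ * r ^ (k + 1)) ^ 2 ≤ 1 := by
  have hr1 : r < 1 := hr.trans_lt (bohrRadius_lt_one hp0)
  have hg0 : g 0 = c 0 := by
    simpa using (hc 0 (mem_ball_self one_pos)).unique (hasSum_single 0 fun n hn => by simp [hn])
  have hwiener : ∀ k, ‖c (k + 1)‖ ≤ 1 - ‖g 0‖ ^ 2 := fun k =>
    hg0 ▸ norm_coeff_le_one_sub_sq hg hc hcs k.succ_pos
  have hterm : ∀ k, ‖c (k + 1)‖ * r ^ (k + 1) ≤ (1 - ‖g 0‖ ^ 2) * r ^ (k + 1) := fun k =>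
    mul_le_mul_of_nonneg_right (hwiener k) (by positivity)
  obtain ⟨hS1, hT1⟩ :=
    summable_and_tsum_le_of_le_geometric (fun k => by positivity) hterm hr0 hr1
  obtain ⟨hS2, hT2⟩ := summable_and_tsum_le_of_le_geometric
    (u := fun k => (‖c (k + 1)‖ * r ^ (k + 1)) ^ 2) (β := (1 - ‖g 0‖ ^ 2) ^ 2)
    (fun k => by positivity)
    (fun k => (pow_le_pow_left₀ (by positivity) (hterm k) 2).trans_eq (by ring)) (sq_nonneg r)
    (by nlinarith)
  have hval : ‖g r‖ ≤ (‖g 0‖ + r) / (1 + ‖g 0‖ * r) := by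
    simpa [abs_of_nonneg hr0] using
      norm_le_of_mapsTo_ball hd hg (z := r) (by simpa [abs_of_nonneg hr0] using hr1)
  have h1r : 0 < 1 - r := sub_pos.2 hr1
  refine ⟨hS1, hS2, ?_⟩
  calc _ ≤ ((‖g 0‖ + r) / (1 + ‖g 0‖ * r)) ^ p + (1 - ‖g 0‖ ^ 2) * (r / (1 - r)) +
        (1 / (1 + ‖g 0‖) + r / (1 - r)) * ((1 - ‖g 0‖ ^ 2) ^ 2 * (r ^ 2 / (1 - r ^ 2))) := by
        gcongr
    _ ≤ 1 :=
      bohr_majorant_le_one (norm_nonneg _) (norm_zero_lt_one_of_mapsTo_ball hg) hr0 hp0 hp2 hr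

theorem stmt_7_general (n : ℕ) (Q : Set (Fin n → ℂ))
    (hcirc : ∀ z ∈ Q, ∀ ξ : ℂ, ‖ξ‖ ≤ 1 → ξ • z ∈ Q)
    (f : (Fin n → ℂ) → ℂ) (hf : DifferentiableOn ℂ f Q)
    (hb : ∀ z ∈ Q, ‖f z‖ < 1)
    (P : ℕ → (Fin n → ℂ) → ℂ)
    (hhom : ∀ (k : ℕ) (ξ : ℂ) (z : Fin n → ℂ), P k (ξ • z) = ξ ^ k * P k z)
    (hsum : ∀ z ∈ Q, HasSum (fun k : ℕ => P k z) (f z))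
    (p : ℝ) (hp0 : 0 < p) (hp2 : p ≤ 2)
    (w : Fin n → ℂ) (hw : w ∈ Q) (r : ℝ) (hr0 : 0 ≤ r)
    (hr : r ≤ p / (Real.sqrt (4 * p + 1) + p + 1)) :
    Summable (fun k : ℕ => ‖P (k + 1) ((r : ℂ) • w)‖) ∧
    Summable (fun k : ℕ => ‖P (k + 1) ((r : ℂ) • w)‖ ^ 2) ∧
    ‖f ((r : ℂ) • w)‖ ^ p + (∑' k : ℕ, ‖P (k + 1) ((r : ℂ) • w)‖) +
      (1 / (1 + ‖f 0‖) + r / (1 - r)) *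
        ∑' k : ℕ, ‖P (k + 1) ((r : ℂ) • w)‖ ^ 2 ≤ 1 := by
  have hdisc : ∀ ξ ∈ ball (0 : ℂ) 1, ξ • w ∈ Q := fun ξ hξ =>
    hcirc w hw ξ (mem_ball_zero_iff.1 hξ).le
  have hnorm : ∀ k, ‖P k ((r : ℂ) • w)‖ = ‖P k w‖ * r ^ k := fun k => by
    rw [hhom, norm_mul, norm_pow, norm_real, Real.norm_of_nonneg hr0, mul_comm]
  have h := bohr_inequality_of_mapsTo_ball (g := fun ξ => f (ξ • w)) (c := fun k => P k w)
    (hf.comp (differentiable_id.smul_const w).differentiableOn hdisc)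
    (fun ξ hξ => mem_ball_zero_iff.2 (hb _ (hdisc ξ hξ)))
    (fun ξ hξ => by simpa [hhom, mul_comm] using hsum _ (hdisc ξ hξ))
    (hsum w hw).summable hp0 hp2 hr0 hr
  simp only [hnorm]
  simpa only [zero_smul] using h

/-- Corollary of Theorem 5 of Liu–Ponnusamy:
if `Q ⊆ ℂⁿ` is an open complete circular domain containing `0`, `f` holomorphic on `Q`
with `|f| < 1`, expanded as `f = Σ_k P_k` with `P_k` homogeneous of degree `k`,
`a = |f(0)| < 1`, `p ∈ (0,2]`, then for `w ∈ Q` and `0 ≤ r ≤ R_p = p/(√(4p+1)+p+1)`,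
`|f(r•w)|^p + Σ_{k≥1} |P_k(r•w)| + (1/(1+a) + r/(1-r)) Σ_{k≥1} |P_k(r•w)|² ≤ 1`. -/
theorem stmt_7 (n : ℕ) (Q : Set (Fin n → ℂ)) (hQopen : IsOpen Q)
    (h0Q : (0 : Fin n → ℂ) ∈ Q)
    (hcirc : ∀ z ∈ Q, ∀ ξ : ℂ, ‖ξ‖ ≤ 1 → ξ • z ∈ Q)
    (f : (Fin n → ℂ) → ℂ) (hf : DifferentiableOn ℂ f Q)
    (hb : ∀ z ∈ Q, ‖f z‖ < 1)
    (P : ℕ → (Fin n → ℂ) → ℂ)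
    (hhom : ∀ (k : ℕ) (ξ : ℂ) (z : Fin n → ℂ), P k (ξ • z) = ξ ^ k * P k z)
    (hP0 : ∀ z : Fin n → ℂ, P 0 z = f 0)
    (hsum : ∀ z ∈ Q, HasSum (fun k : ℕ => P k z) (f z))
    (ha : ‖f 0‖ < 1) (p : ℝ) (hp0 : 0 < p) (hp2 : p ≤ 2)
    (w : Fin n → ℂ) (hw : w ∈ Q) (r : ℝ) (hr0 : 0 ≤ r)
    (hr : r ≤ p / (Real.sqrt (4 * p + 1) + p + 1)) :
    Summable (fun k : ℕ => ‖P (k + 1) ((r : ℂ) • w)‖) ∧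
    Summable (fun k : ℕ => ‖P (k + 1) ((r : ℂ) • w)‖ ^ 2) ∧
    ‖f ((r : ℂ) • w)‖ ^ p + (∑' k : ℕ, ‖P (k + 1) ((r : ℂ) • w)‖) +
      (1 / (1 + ‖f 0‖) + r / (1 - r)) *
        ∑' k : ℕ, ‖P (k + 1) ((r : ℂ) • w)‖ ^ 2 ≤ 1 :=
  stmt_7_general n Q hcirc f hf hb P hhom hsum p hp0 hp2 w hw r hr0 hr
end

section
/- Let a = 1/√2 and let ψ(z) = z(a − z)/(1 − a z), which is analytic on 𝔻 with |ψ(z)| < 1 on 𝔻, ψ(0) = 0, and Taylor coefficients a₁ = a, a_n = (a² − 1)a^{n−2} for n ≥ 2. Then for every r with 1/√2 < r < 1, Σ_{n=1}^∞ |a_n| r^n = a r + (1 − a²) r²/(1 − a r) = (r/√2)/(1 − r/√2) > 1. (Hence the radius 1/√2 in Bombieri's inequality Σ_{n=1}^∞ |a_n| r^n ≤ 1 for f with f(0) = 0 is best possible.) -/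
/-!
Since `|1 - ā z|² - |a - z|² = (1 - |a|²)(1 - |z|²)`, the Möbius factor `(a - z)/(1 - ā z)` maps
the unit disk into the closed unit disk when `|a| ≤ 1`, so `|ψ(z)| ≤ |z| < 1`. The coefficient sum
is geometric, and `a² = 1/2` turns `(1 - a²) r²` into `(a r)²`, so it equals `x/(1 - x)` with
`x = a r > 1/2`.
-/

open ComplexConjugate

namespace Complex

theorem normSq_one_sub_conj_mul_sub_normSq_sub (a z : ℂ) :
    normSq (1 - conj a * z) - normSq (a - z) = (1 - normSq a) * (1 - normSq z) := by
  apply ofReal_injective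
  push_cast [← mul_conj]
  simp only [map_sub, map_mul, map_one, conj_conj]
  ring

theorem norm_sub_le_norm_one_sub_conj_mul {a z : ℂ} (ha : ‖a‖ ≤ 1) (hz : ‖z‖ ≤ 1) :
    ‖a - z‖ ≤ ‖1 - conj a * z‖ := by
  have ha' : normSq a ≤ 1 := by rw [normSq_eq_norm_sq]; nlinarith [norm_nonneg a]
  have hz' : normSq z ≤ 1 := by rw [normSq_eq_norm_sq]; nlinarith [norm_nonneg z]
  rw [← sq_le_sq₀ (norm_nonneg _) (norm_nonneg _), ← normSq_eq_norm_sq, ← normSq_eq_norm_sq]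
  nlinarith [normSq_one_sub_conj_mul_sub_normSq_sub a z,
    mul_nonneg (sub_nonneg.2 ha') (sub_nonneg.2 hz')]

theorem one_sub_conj_mul_ne_zero {a z : ℂ} (ha : ‖a‖ ≤ 1) (hz : ‖z‖ < 1) :
    1 - conj a * z ≠ 0 := by
  have : ‖conj a * z‖ < 1 := by
    rw [norm_mul, RCLike.norm_conj]
    exact mul_lt_one_of_nonneg_of_lt_one_right ha (norm_nonneg z) hz
  intro h
  rw [← eq_of_sub_eq_zero h, norm_one] at this
  exact lt_irrefl 1 this

theorem differentiableOn_mul_sub_div_one_sub_conj_mul {a : ℂ} (ha : ‖a‖ ≤ 1) :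
    DifferentiableOn ℂ (fun z => z * (a - z) / (1 - conj a * z)) (Metric.ball 0 1) :=
  DifferentiableOn.div (by fun_prop) (by fun_prop) fun _ hz =>
    one_sub_conj_mul_ne_zero ha (mem_ball_zero_iff.1 hz)

theorem norm_mul_sub_div_one_sub_conj_mul_lt_one {a z : ℂ} (ha : ‖a‖ ≤ 1) (hz : ‖z‖ < 1) :
    ‖z * (a - z) / (1 - conj a * z)‖ < 1 := by
  have hden : 0 < ‖1 - conj a * z‖ := norm_pos_iff.2 (one_sub_conj_mul_ne_zero ha hz)
  rw [norm_div, norm_mul, div_lt_one hden]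
  calc ‖z‖ * ‖a - z‖ ≤ ‖z‖ * ‖1 - conj a * z‖ :=
        mul_le_mul_of_nonneg_left (norm_sub_le_norm_one_sub_conj_mul ha hz.le) (norm_nonneg z)
    _ < ‖1 - conj a * z‖ := mul_lt_of_lt_one_left hden hz

end Complex

theorem tsum_mul_pow_mul_pow_add_two {c a r : ℝ} (h : |a * r| < 1) :
    ∑' n : ℕ, c * a ^ n * r ^ (n + 2) = c * r ^ 2 / (1 - a * r) := by
  have hterm (n : ℕ) : c * a ^ n * r ^ (n + 2) = c * r ^ 2 * (a * r) ^ n := by ring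
  rw [tsum_congr hterm, tsum_mul_left, tsum_geometric_of_abs_lt_one h, div_eq_mul_inv]

theorem add_sq_div_one_sub {x : ℝ} (hx : x ≠ 1) : x + x ^ 2 / (1 - x) = x / (1 - x) := by
  have : 1 - x ≠ 0 := sub_ne_zero.2 hx.symm
  field_simp
  ring

theorem one_lt_div_one_sub {x : ℝ} (h₁ : 1 / 2 < x) (h₂ : x < 1) : 1 < x / (1 - x) := by
  rw [one_lt_div (by linarith)]
  linarith

theorem Real.inv_sqrt_two_sq : (√2)⁻¹ ^ 2 = 1 / 2 := by
  rw [inv_pow, Real.sq_sqrt zero_le_two, one_div]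

/-- Sharpness of Bombieri's radius `1/√2` (used in Theorem 2 of Liu–Ponnusamy):
with `a = 1/√2`, the function `ψ(z) = z(a-z)/(1-az)` is analytic on `𝔻` with
`|ψ| < 1` and `ψ(0) = 0`, and for every `r` with `1/√2 < r < 1` its coefficient
series satisfies
`Σ_{n≥1} |aₙ| rⁿ = a r + (1-a²) r²/(1-ar) = (r/√2)/(1 - r/√2) > 1`. -/
theorem stmt_15 (ψ : ℂ → ℂ)
    (hψ : ∀ z : ℂ,
      ψ z = z * ((((Real.sqrt 2)⁻¹ : ℝ) : ℂ) - z) /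
        (1 - (((Real.sqrt 2)⁻¹ : ℝ) : ℂ) * z))
    (r : ℝ) (hr1 : (Real.sqrt 2)⁻¹ < r) (hr2 : r < 1) :
    DifferentiableOn ℂ ψ (Metric.ball (0 : ℂ) 1) ∧
    (∀ z ∈ Metric.ball (0 : ℂ) 1, ‖ψ z‖ < 1) ∧
    ψ 0 = 0 ∧
    (Real.sqrt 2)⁻¹ * r +
        (∑' n : ℕ, (1 - ((Real.sqrt 2)⁻¹) ^ 2) * ((Real.sqrt 2)⁻¹) ^ n * r ^ (n + 2))
      = (Real.sqrt 2)⁻¹ * r +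
          (1 - ((Real.sqrt 2)⁻¹) ^ 2) * r ^ 2 / (1 - (Real.sqrt 2)⁻¹ * r) ∧
    (Real.sqrt 2)⁻¹ * r +
        (1 - ((Real.sqrt 2)⁻¹) ^ 2) * r ^ 2 / (1 - (Real.sqrt 2)⁻¹ * r)
      = (r / Real.sqrt 2) / (1 - r / Real.sqrt 2) ∧
    1 < (r / Real.sqrt 2) / (1 - r / Real.sqrt 2) := by
  set a : ℝ := (Real.sqrt 2)⁻¹
  have ha₀ : 0 < a := by positivity
  have ha₁ : a < 1 := inv_lt_one_of_one_lt₀ Real.one_lt_sqrt_two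
  have ha : ‖(a : ℂ)‖ ≤ 1 := by rw [Complex.norm_real, Real.norm_of_nonneg ha₀.le]; exact ha₁.le
  have hψ' : ψ = fun z => z * (a - z) / (1 - conj (a : ℂ) * z) := by
    funext z; rw [hψ, Complex.conj_ofReal]
  have har : r / √2 = a * r := by rw [div_eq_inv_mul]
  have har₁ : a * r < 1 := by nlinarith
  have har₂ : 1 / 2 < a * r := by nlinarith [Real.inv_sqrt_two_sq]
  have hcoeff : (1 - a ^ 2) * r ^ 2 = (a * r) ^ 2 := by rw [mul_pow, Real.inv_sqrt_two_sq]; ring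
  refine ⟨hψ' ▸ Complex.differentiableOn_mul_sub_div_one_sub_conj_mul ha,
    fun z hz => hψ' ▸ Complex.norm_mul_sub_div_one_sub_conj_mul_lt_one ha (mem_ball_zero_iff.1 hz),
    by simp [hψ'], ?_, ?_, ?_⟩
  · rw [tsum_mul_pow_mul_pow_add_two (abs_lt.2 ⟨by nlinarith, har₁⟩)]
  · rw [hcoeff, har, add_sq_div_one_sub har₁.ne]
  · rw [har]
    exact one_lt_div_one_sub har₂ har₁
end
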